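/- (Lattice property of vector-valued block spaces.) Let $1 < q < \infty$ and $1 < p < t < r < \infty$ or $1 < p \le t < r = \infty$. A sequence-valued measurable function $\vec{f} = \{f_i\}_{i=1}^\infty$ belongs to $\mathcal{H}_{p'}^{t',r'}(\ell^{q'})$ if and only if there exists $\vec{g} \in \mathcal{H}_{p'}^{t',r'}(\ell^{q'})$ such that $|f_i(x)| \le g_i(x)$ for each $i \in \mathbb{N}$ and almost every $x$. Moreover, in that case $\|\vec{f}\|_{\mathcal{H}_{p'}^{t',r'}(\ell^{q'})} \le \|\vec{g}\|_{\mathcal{H}_{p'}^{t',r'}(\ell^{q'})}$. -/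
import Mathlib


open MeasureTheory Filter ENNReal

noncomputable section
open scoped Topology

def dyadicCube (n : ℕ) (j : ℤ) (m : Fin n → ℤ) : Set (Fin n → ℝ) :=
  {x | ∀ i, (2:ℝ) ^ (-(j:ℝ)) * m i ≤ x i ∧ x i < (2:ℝ) ^ (-(j:ℝ)) * (m i + 1)}

def cubeVol (n : ℕ) (j : ℤ) : ℝ≥0∞ := (2:ℝ≥0∞) ^ (-((j:ℝ) * n))

def conj (a : ℝ) : ℝ := a / (a - 1)

def conjE (r : ℝ≥0∞) : ℝ := if r = ∞ then 1 else conj r.toReal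

/-- The `ℓ^{q'}` norm of a real sequence, as an extended nonnegative real. -/
def seqENorm (q' : ℝ) (v : ℕ → ℝ) : ℝ≥0∞ := (∑' i, ENNReal.ofReal |v i| ^ q') ^ (1/q')

/-- A `(p',t',ℓ^{q'})`-block supported on the dyadic cube `Q_{j,k}`. -/
def IsSeqBlock (n : ℕ) (p t q : ℝ) (j : ℤ) (k : Fin n → ℤ)
    (b : (Fin n → ℝ) → ℕ → ℝ) : Prop :=
  (∀ i, Measurable fun x => b x i) ∧ (∀ x, x ∉ dyadicCube n j k → b x = 0) ∧
    (∫⁻ x, seqENorm (conj q) (b x) ^ conj p) ^ (1 / conj p) ≤ cubeVol n j ^ (1/t - 1/p)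

/-- A representation of the `ℓ^{q'}`-valued function `f` as a sum of blocks. -/
def IsSeqBlockRep (n : ℕ) (p t q : ℝ) (f : (Fin n → ℝ) → ℕ → ℝ)
    (lam : ℤ × (Fin n → ℤ) → ℝ) (b : ℤ × (Fin n → ℤ) → (Fin n → ℝ) → ℕ → ℝ) : Prop :=
  (∀ jk : ℤ × (Fin n → ℤ), IsSeqBlock n p t q jk.1 jk.2 (b jk)) ∧
    ∀ᵐ x : Fin n → ℝ ∂volume, ∀ i, HasSum (fun jk => lam jk * b jk x i) (f x i)

/-- The norm of the `ℓ^{q'}`-valued block space `𝓗_{p'}^{t',r'}(ℓ^{q'})`. -/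
def seqBlockNorm (n : ℕ) (p t q r' : ℝ) (f : (Fin n → ℝ) → ℕ → ℝ) : ℝ≥0∞ :=
  ⨅ (lam : ℤ × (Fin n → ℤ) → ℝ) (b : ℤ × (Fin n → ℤ) → (Fin n → ℝ) → ℕ → ℝ)
    (_ : IsSeqBlockRep n p t q f lam b),
    (∑' jk : ℤ × (Fin n → ℤ), ENNReal.ofReal |lam jk| ^ r') ^ (1/r')

/-- The norm of the slice space `(𝓔_{p'}^{t',r'})_j(ℓ^{q'})` at generation `j`. -/
def sliceNorm (n : ℕ) (p t q r' : ℝ) (j : ℤ) (f : (Fin n → ℝ) → ℕ → ℝ) : ℝ≥0∞ :=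
  (∑' k : Fin n → ℤ, (cubeVol n j ^ (1/conj t - 1/conj p) *
    (∫⁻ x in dyadicCube n j k, seqENorm (conj q) (f x) ^ conj p) ^ (1/conj p)) ^ r') ^ (1/r')

/-- Membership in the slice space. -/
def MemSlice (n : ℕ) (p t q r' : ℝ) (j : ℤ) (f : (Fin n → ℝ) → ℕ → ℝ) : Prop :=
  (∀ i, Measurable fun x => f x i) ∧ sliceNorm n p t q r' j f < ∞

/-- An `ℝ≥0∞`-valued `(p',t',ℓ^{q'})`-block supported on `Q_{j,k}`. -/
def IsSeqBlockE (n : ℕ) (p t q : ℝ) (j : ℤ) (k : Fin n → ℤ)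
    (b : (Fin n → ℝ) → ℕ → ℝ≥0∞) : Prop :=
  (∀ i, Measurable fun x => b x i) ∧ (∀ x, x ∉ dyadicCube n j k → b x = 0) ∧
    (∫⁻ x, (∑' i, b x i ^ conj q) ^ (conj p / conj q)) ^ (1 / conj p) ≤
      cubeVol n j ^ (1/t - 1/p)

/-- The block norm for nonnegative (extended-real valued) `ℓ^{q'}`-valued functions. -/
def seqBlockNormE (n : ℕ) (p t q r' : ℝ) (F : (Fin n → ℝ) → ℕ → ℝ≥0∞) : ℝ≥0∞ :=
  ⨅ (lam : ℤ × (Fin n → ℤ) → ℝ≥0∞) (b : ℤ × (Fin n → ℤ) → (Fin n → ℝ) → ℕ → ℝ≥0∞)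
    (_ : (∀ jk : ℤ × (Fin n → ℤ), IsSeqBlockE n p t q jk.1 jk.2 (b jk)) ∧
      ∀ᵐ x : Fin n → ℝ ∂volume, ∀ i, F x i = ∑' jk : ℤ × (Fin n → ℤ), lam jk * b jk x i),
    (∑' jk : ℤ × (Fin n → ℤ), lam jk ^ r') ^ (1/r')

/-- The Euclidean ball in `ℝⁿ`. -/
def eBall (n : ℕ) (c : Fin n → ℝ) (R : ℝ) : Set (Fin n → ℝ) :=
  {y | ∑ i, (y i - c i) ^ 2 < R ^ 2}

/-- The powered Hardy–Littlewood maximal operator `𝓜_η` (over Euclidean balls). -/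
def maximalPow (n : ℕ) (η : ℝ) (g : (Fin n → ℝ) → ℝ) (x : Fin n → ℝ) : ℝ≥0∞ :=
  (⨆ (c : Fin n → ℝ) (R : ℝ) (_ : 0 < R) (_ : x ∈ eBall n c R),
    (volume (eBall n c R))⁻¹ * ∫⁻ y in eBall n c R, ENNReal.ofReal |g y| ^ η) ^ (1/η)


open scoped Topology in
lemma seqENorm_mono (q' : ℝ) (hq' : 0 ≤ q') {v w : ℕ → ℝ} (h : ∀ i, |v i| ≤ |w i|) :
    seqENorm q' v ≤ seqENorm q' w := by
  unfold seqENorm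
  refine ENNReal.rpow_le_rpow ?_ (by positivity)
  exact ENNReal.tsum_le_tsum fun i =>
    ENNReal.rpow_le_rpow (ENNReal.ofReal_le_ofReal (h i)) hq'

lemma conj_pos {a : ℝ} (ha : 1 < a) : 0 < conj a :=
  div_pos (lt_trans one_pos ha) (by linarith)

lemma seqBlockNorm_le_of_rep {n : ℕ} {p t q r' : ℝ} {f : (Fin n → ℝ) → ℕ → ℝ}
    {lam : ℤ × (Fin n → ℤ) → ℝ} {b : ℤ × (Fin n → ℤ) → (Fin n → ℝ) → ℕ → ℝ}
    (hrep : IsSeqBlockRep n p t q f lam b) :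
    seqBlockNorm n p t q r' f ≤
      (∑' jk : ℤ × (Fin n → ℤ), ENNReal.ofReal |lam jk| ^ r') ^ (1/r') :=
  iInf_le_of_le lam (iInf_le_of_le b (iInf_le _ hrep))

lemma rep_mult {n : ℕ} {p t q : ℝ} (hp : 0 ≤ conj p) (hq : 0 ≤ conj q)
    {g : (Fin n → ℝ) → ℕ → ℝ} {lam : ℤ × (Fin n → ℤ) → ℝ}
    {b : ℤ × (Fin n → ℤ) → (Fin n → ℝ) → ℕ → ℝ}
    (hrep : IsSeqBlockRep n p t q g lam b)
    (θ f : (Fin n → ℝ) → ℕ → ℝ) (hθm : ∀ i, Measurable fun x => θ x i)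
    (hθ : ∀ x i, |θ x i| ≤ 1)
    (heq : ∀ᵐ x : Fin n → ℝ ∂volume, ∀ i, f x i = θ x i * g x i) :
    IsSeqBlockRep n p t q f lam (fun jk x i => θ x i * b jk x i) := by
  constructor
  · intro jk
    obtain ⟨hm, hs, hn⟩ := hrep.1 jk
    refine ⟨fun i => (hθm i).mul (hm i), fun x hx => ?_, ?_⟩
    · funext i
      have : b jk x = 0 := hs x hx
      simp [this]
    · refine le_trans ?_ hn
      refine ENNReal.rpow_le_rpow (lintegral_mono fun x => ?_)
        (div_nonneg zero_le_one hp)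
      refine ENNReal.rpow_le_rpow ?_ hp
      refine seqENorm_mono _ hq fun i => ?_
      calc |θ x i * b jk x i| = |θ x i| * |b jk x i| := abs_mul _ _
        _ ≤ 1 * |b jk x i| := mul_le_mul_of_nonneg_right (hθ x i) (abs_nonneg _)
        _ = |b jk x i| := one_mul _
  · filter_upwards [hrep.2, heq] with x hx hfx i
    have h1 : HasSum (fun jk => θ x i * (lam jk * b jk x i)) (θ x i * g x i) :=
      (hx i).mul_left (θ x i)
    have h2 : (fun jk : ℤ × (Fin n → ℤ) => lam jk * (θ x i * b jk x i)) =
        fun jk => θ x i * (lam jk * b jk x i) := by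
      funext jk; ring
    rw [hfx i, h2]
    exact h1

lemma seqBlockNorm_mult {n : ℕ} {p t q : ℝ} (r' : ℝ) (hp : 0 ≤ conj p) (hq : 0 ≤ conj q)
    (θ f g : (Fin n → ℝ) → ℕ → ℝ) (hθm : ∀ i, Measurable fun x => θ x i)
    (hθ : ∀ x i, |θ x i| ≤ 1)
    (heq : ∀ᵐ x : Fin n → ℝ ∂volume, ∀ i, f x i = θ x i * g x i) :
    seqBlockNorm n p t q r' f ≤ seqBlockNorm n p t q r' g := by
  refine le_iInf fun lam => le_iInf fun b => le_iInf fun hrep => ?_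
  exact seqBlockNorm_le_of_rep (rep_mult hp hq hrep θ f hθm hθ heq)

/-- If `g` has a block representation, then `g` agrees a.e. (in every coordinate)
with a function that is measurable in each coordinate. -/
lemma exists_measurable_ae_eq {n : ℕ} {p t q : ℝ} {g : (Fin n → ℝ) → ℕ → ℝ}
    {lam : ℤ × (Fin n → ℤ) → ℝ} {b : ℤ × (Fin n → ℤ) → (Fin n → ℝ) → ℕ → ℝ}
    (hrep : IsSeqBlockRep n p t q g lam b) :
    ∃ g' : (Fin n → ℝ) → ℕ → ℝ, (∀ i, Measurable fun x => g' x i) ∧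
      ∀ᵐ x : Fin n → ℝ ∂volume, ∀ i, g x i = g' x i := by
  obtain ⟨e⟩ : Nonempty (ℤ × (Fin n → ℤ) ≃ ℕ) := by
    obtain ⟨d⟩ := nonempty_denumerable (ℤ × (Fin n → ℤ))
    exact ⟨Denumerable.eqv _⟩
  have key : ∀ i : ℕ, ∃ gl : (Fin n → ℝ) → ℝ, Measurable gl ∧
      ∀ᵐ x : Fin n → ℝ ∂volume, g x i = gl x := by
    intro i
    set S : ℕ → (Fin n → ℝ) → ℝ := fun N x =>
      ∑ m ∈ Finset.range N, lam (e.symm m) * b (e.symm m) x i with hS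
    have hSm : ∀ N, Measurable (S N) := by
      intro N
      apply Finset.measurable_sum
      intro m _
      exact measurable_const.mul ((hrep.1 (e.symm m)).1 i)
    have htend : ∀ᵐ x : Fin n → ℝ ∂volume, Tendsto (fun N => S N x) atTop (𝓝 (g x i)) := by
      filter_upwards [hrep.2] with x hx
      have : HasSum (fun m : ℕ => lam (e.symm m) * b (e.symm m) x i) (g x i) :=
        (Equiv.hasSum_iff e.symm).mpr (hx i)
      exact this.tendsto_sum_nat
    obtain ⟨gl, hglm, hgl⟩ :=
      measurable_limit_of_tendsto_metrizable_ae (L := atTop) (μ := volume)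
        (f := S) (fun N => (hSm N).aemeasurable)
        (htend.mono fun x hx => ⟨g x i, hx⟩)
    refine ⟨gl, hglm, ?_⟩
    filter_upwards [htend, hgl] with x h1 h2
    exact tendsto_nhds_unique h1 h2
  choose gl hglm hgl using key
  refine ⟨fun x i => gl i x, hglm, ?_⟩
  rw [MeasureTheory.ae_all_iff]
  exact hgl

lemma seqBlockNorm_le_of_dom {n : ℕ} {p t q : ℝ} (r' : ℝ) (hp : 0 ≤ conj p)
    (hq : 0 ≤ conj q) (f g : (Fin n → ℝ) → ℕ → ℝ)
    (hf : ∀ i, Measurable fun x => f x i)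
    (hdom : ∀ᵐ x : Fin n → ℝ ∂volume, ∀ i, |f x i| ≤ g x i) :
    seqBlockNorm n p t q r' f ≤ seqBlockNorm n p t q r' g := by
  refine le_iInf fun lam => le_iInf fun b => le_iInf fun hrep => ?_
  obtain ⟨g', hg'm, hg'⟩ := exists_measurable_ae_eq hrep
  set θ : (Fin n → ℝ) → ℕ → ℝ := fun x i =>
    max (-1) (min 1 (if g' x i = 0 then 0 else f x i / g' x i)) with hθdef
  have hθm : ∀ i, Measurable fun x => θ x i := by
    intro i
    apply Measurable.max measurable_const
    apply Measurable.min measurable_const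
    exact Measurable.ite ((hg'm i) (measurableSet_singleton 0)) measurable_const
      ((hf i).div (hg'm i))
  have hθ : ∀ x i, |θ x i| ≤ 1 := by
    intro x i
    rw [abs_le]
    exact ⟨le_max_left _ _, max_le (by norm_num) (min_le_left _ _)⟩
  have heq : ∀ᵐ x : Fin n → ℝ ∂volume, ∀ i, f x i = θ x i * g x i := by
    filter_upwards [hdom, hg'] with x hd hgg i
    by_cases h0 : g x i = 0
    · have hf0 : f x i = 0 := by
        have := hd i
        rw [h0] at this
        exact abs_eq_zero.mp (le_antisymm this (abs_nonneg _))
      simp [hf0, h0]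
    · have hgpos : 0 < g x i :=
        lt_of_le_of_ne ((abs_nonneg _).trans (hd i)) (Ne.symm h0)
      have hg'0 : g' x i ≠ 0 := by rw [← hgg i]; exact h0
      have hle : f x i / g x i ≤ 1 := by
        rw [div_le_one hgpos]
        exact (le_abs_self _).trans (hd i)
      have hge : -1 ≤ f x i / g x i := by
        rw [le_div_iff₀ hgpos, neg_one_mul]
        exact neg_le.mpr ((neg_le_abs (f x i)).trans (hd i))
      have hθval : θ x i = f x i / g x i := by
        simp only [hθdef, ← hgg i, if_neg h0]
        rw [min_eq_right hle, max_eq_right hge]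
      rw [hθval, div_mul_cancel₀ _ h0]
  exact seqBlockNorm_le_of_rep (rep_mult hp hq hrep θ f hθm hθ heq)

theorem seq_block_space_lattice (n : ℕ) (p t q : ℝ) (r : ℝ≥0∞)
    (hq : 1 < q) (hp : 1 < p)
    (hcase : (p < t ∧ ENNReal.ofReal t < r ∧ r ≠ ∞) ∨ (p ≤ t ∧ r = ∞))
    (f : (Fin n → ℝ) → ℕ → ℝ) (hf : ∀ i, Measurable fun x => f x i) :
    (seqBlockNorm n p t q (conjE r) f < ∞ ↔
      ∃ g : (Fin n → ℝ) → ℕ → ℝ, seqBlockNorm n p t q (conjE r) g < ∞ ∧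
        ∀ᵐ x : Fin n → ℝ ∂volume, ∀ i, |f x i| ≤ g x i) ∧
    ∀ g : (Fin n → ℝ) → ℕ → ℝ, seqBlockNorm n p t q (conjE r) g < ∞ →
      (∀ᵐ x : Fin n → ℝ ∂volume, ∀ i, |f x i| ≤ g x i) →
      seqBlockNorm n p t q (conjE r) f ≤ seqBlockNorm n p t q (conjE r) g := by
  have hp0 : 0 ≤ conj p := (conj_pos hp).le
  have hq0 : 0 ≤ conj q := (conj_pos hq).le
  constructor
  · constructor
    · intro hfin
      refine ⟨fun x i => |f x i|, lt_of_le_of_lt ?_ hfin,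
        Eventually.of_forall fun x i => le_refl _⟩
      refine seqBlockNorm_mult (conjE r) hp0 hq0
        (fun x i => if f x i < 0 then -1 else 1) _ f
        (fun i => Measurable.ite (measurableSet_lt (hf i) measurable_const)
          measurable_const measurable_const) (fun x i => ?_)
        (Eventually.of_forall fun x i => ?_)
      · by_cases h : f x i < 0 <;> simp [h]
      · by_cases h : f x i < 0
        · simp [h, abs_of_neg h]
        · simp [h, abs_of_nonneg (not_lt.mp h)]
    · rintro ⟨g, hg, hdom⟩
      exact lt_of_le_of_lt (seqBlockNorm_le_of_dom (conjE r) hp0 hq0 f g hf hdom) hg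
  · intro g hg hdom
    exact seqBlockNorm_le_of_dom (conjE r) hp0 hq0 f g hf hdom

end
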